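/- arXiv:1104.1902 — 2 statements merged into one kernel-verified Lean document; each statement's English description precedes it below -/
import Mathlib

section
/- Every 3-irreducible numerical semigroup is irreducible. -/
/-- A numerical semigroup: a subset of ℕ containing 0, closed under addition,
with finite complement. -/
def IsNumSgp (S : Set ℕ) : Prop :=
  0 ∈ S ∧ (∀ a ∈ S, ∀ b ∈ S, a + b ∈ S) ∧ (Sᶜ).Finite

/-- Multiplicity: least positive element. -/
noncomputable def nsMult (S : Set ℕ) : ℕ := sInf {n | n ∈ S ∧ 0 < n}

/-- Frobenius number: largest integer not in S. -/
noncomputable def nsFrob (S : Set ℕ) : ℕ := sSup Sᶜ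

/-- Genus: number of gaps. -/
noncomputable def nsGenus (S : Set ℕ) : ℕ := Sᶜ.ncard

/-- Special gaps of S. -/
def nsSG (S : Set ℕ) : Set ℕ := {h | h ∉ S ∧ IsNumSgp (S ∪ {h})}

/-- Special gaps of S larger than m. -/
def nsSGm (m : ℕ) (S : Set ℕ) : Set ℕ := {h ∈ nsSG S | m < h}

/-- S is irreducible: not an intersection of two numerical semigroups properly containing it. -/
def nsIrr (S : Set ℕ) : Prop :=
  ¬ ∃ T₁ T₂ : Set ℕ, IsNumSgp T₁ ∧ IsNumSgp T₂ ∧ S ⊂ T₁ ∧ S ⊂ T₂ ∧ S = T₁ ∩ T₂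

/-- S is m-irreducible: not an intersection of two numerical semigroups of
multiplicity m properly containing it. -/
def nsMIrr (m : ℕ) (S : Set ℕ) : Prop :=
  ¬ ∃ T₁ T₂ : Set ℕ, IsNumSgp T₁ ∧ IsNumSgp T₂ ∧ nsMult T₁ = m ∧ nsMult T₂ = m ∧
      S ⊂ T₁ ∧ S ⊂ T₂ ∧ S = T₁ ∩ T₂

/-- Symmetric: irreducible with odd Frobenius number. -/
def nsSym (S : Set ℕ) : Prop := nsIrr S ∧ Odd (nsFrob S)

/-- Pseudosymmetric: irreducible with even Frobenius number. -/
def nsPseudoSym (S : Set ℕ) : Prop := nsIrr S ∧ Even (nsFrob S)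

/-- m-symmetric: m-irreducible with odd Frobenius number. -/
def nsMSym (m : ℕ) (S : Set ℕ) : Prop := nsMIrr m S ∧ Odd (nsFrob S)

/-- m-pseudosymmetric: m-irreducible with even Frobenius number. -/
def nsMPseudoSym (m : ℕ) (S : Set ℕ) : Prop := nsMIrr m S ∧ Even (nsFrob S)

/-- The numerical semigroup (submonoid) generated by a set of naturals. -/
def nsGen (A : Set ℕ) : Set ℕ := (AddSubmonoid.closure A : Set ℕ)

/-- Apéry element: least element of S congruent to i mod m. -/
noncomputable def nsApery (S : Set ℕ) (m i : ℕ) : ℕ := sInf {s | s ∈ S ∧ s % m = i % m}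

/-! Write `S = T₁ ∩ T₂` with `S ⊂ Tᵢ`. Deleting `1` and `2` from each `Tᵢ` leaves numerical
semigroups of multiplicity `3` whose intersection is still `S`, so by `3`-irreducibility one of
them, say the first, equals `S`. Then `T₁` contains `1` or `2`, hence `2` and `3`, hence every
`n ≥ 2`; so `S = {0, 3, 4, …}`, and the same argument puts `2` into `T₂`, hence into `S`. -/

def nsDropBelow (m : ℕ) (T : Set ℕ) : Set ℕ := T ∩ insert 0 (Set.Ici m)

theorem isNumSgp_nsDropBelow {T : Set ℕ} (hT : IsNumSgp T) (m : ℕ) :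
    IsNumSgp (nsDropBelow m T) := by
  obtain ⟨h0, hadd, hfin⟩ := hT
  refine ⟨⟨h0, Set.mem_insert 0 _⟩, ?_, ?_⟩
  · rintro a ⟨haT, ha⟩ b ⟨hbT, hb⟩
    refine ⟨hadd a haT b hbT, ?_⟩
    simp only [Set.mem_insert_iff, Set.mem_Ici] at ha hb ⊢
    omega
  · refine (hfin.union (Set.finite_Iio m)).subset fun x hx => ?_
    simp only [nsDropBelow, Set.mem_compl_iff, Set.mem_inter_iff, Set.mem_insert_iff,
      Set.mem_Ici, not_and, not_or] at hx
    by_cases hxT : x ∈ T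
    · exact Or.inr (Set.mem_Iio.2 (not_le.1 (hx hxT).2))
    · exact Or.inl hxT

theorem nsMult_le {S : Set ℕ} {x : ℕ} (hx : x ∈ S) (hx0 : 0 < x) : nsMult S ≤ x :=
  Nat.sInf_le ⟨hx, hx0⟩

theorem IsNumSgp.nsMult_mem {S : Set ℕ} (hS : IsNumSgp S) : nsMult S ∈ S := by
  have hinf : S.Infinite := by simpa using hS.2.2.infinite_compl
  obtain ⟨n, hn, hn0⟩ := hinf.exists_gt 0
  exact (Nat.sInf_mem (s := {n | n ∈ S ∧ 0 < n}) ⟨n, hn, hn0⟩).1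

theorem nsMult_nsDropBelow {T : Set ℕ} {m : ℕ} (hm : 0 < m) (hmT : m ∈ T) :
    nsMult (nsDropBelow m T) = m := by
  have hmem : m ∈ nsDropBelow m T := ⟨hmT, Set.mem_insert_of_mem 0 Set.self_mem_Ici⟩
  refine le_antisymm (nsMult_le hmem hm) (le_csInf ⟨m, hmem, hm⟩ ?_)
  rintro x ⟨⟨-, hx⟩, hx0⟩
  simp only [Set.mem_insert_iff, Set.mem_Ici] at hx
  omega

theorem subset_nsDropBelow_nsMult {S T : Set ℕ} (hST : S ⊆ T) :
    S ⊆ nsDropBelow (nsMult S) T := by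
  intro x hx
  refine ⟨hST hx, ?_⟩
  rcases Nat.eq_zero_or_pos x with rfl | hx0
  · exact Set.mem_insert 0 _
  · exact Set.mem_insert_of_mem 0 (nsMult_le hx hx0)

theorem Ici_two_subset_of_two_mem_of_three_mem {T : Set ℕ}
    (hadd : ∀ a ∈ T, ∀ b ∈ T, a + b ∈ T) (h2 : 2 ∈ T) (h3 : 3 ∈ T) : Set.Ici 2 ⊆ T := by
  intro n hn
  induction n using Nat.strong_induction_on with
  | _ n ih =>
    rcases (show n = 2 ∨ n = 3 ∨ 4 ≤ n by have := Set.mem_Ici.1 hn; omega) with rfl | rfl | h4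
    · exact h2
    · exact h3
    · simpa [Nat.sub_add_cancel (by omega : 2 ≤ n)] using
        hadd _ (ih (n - 2) (by omega) (Set.mem_Ici.2 (by omega))) 2 h2

theorem two_mem_of_ssubset_of_nsDropBelow_subset {S T : Set ℕ} (h0 : 0 ∈ S)
    (hadd : ∀ a ∈ T, ∀ b ∈ T, a + b ∈ T) (hST : S ⊂ T) (hT : nsDropBelow 3 T ⊆ S) :
    2 ∈ T := by
  obtain ⟨w, hwT, hwS⟩ := Set.exists_of_ssubset hST
  have hw : w = 1 ∨ w = 2 := by
    by_contra! hw
    refine hwS (hT ⟨hwT, ?_⟩)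
    rcases Nat.eq_zero_or_pos w with rfl | hw0
    · exact absurd h0 hwS
    · exact Set.mem_insert_of_mem 0 (Set.mem_Ici.2 (by omega))
  rcases hw with rfl | rfl
  · exact hadd 1 hwT 1 hwT
  · exact hwT

theorem two_mem_of_nsDropBelow_three_subset {S T₁ T₂ : Set ℕ} (h0 : 0 ∈ S) (h3 : 3 ∈ S)
    (hadd₁ : ∀ a ∈ T₁, ∀ b ∈ T₁, a + b ∈ T₁) (hadd₂ : ∀ a ∈ T₂, ∀ b ∈ T₂, a + b ∈ T₂)
    (hST₁ : S ⊂ T₁) (hST₂ : S ⊂ T₂) (heq : S = T₁ ∩ T₂) (hT₁ : nsDropBelow 3 T₁ ⊆ S) :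
    2 ∈ S := by
  have h2T₁ := two_mem_of_ssubset_of_nsDropBelow_subset h0 hadd₁ hST₁ hT₁
  have hIci : Set.Ici 3 ⊆ S := fun n hn => hT₁
    ⟨Ici_two_subset_of_two_mem_of_three_mem hadd₁ h2T₁ (hST₁.subset h3)
      (Set.Ici_subset_Ici.2 (by norm_num) hn), Set.mem_insert_of_mem 0 hn⟩
  have hT₂ : nsDropBelow 3 T₂ ⊆ S := by
    rintro x ⟨-, rfl | hx⟩
    exacts [h0, hIci hx]
  exact heq ▸ ⟨h2T₁, two_mem_of_ssubset_of_nsDropBelow_subset h0 hadd₂ hST₂ hT₂⟩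

/-- Every 3-irreducible numerical semigroup is irreducible. -/
theorem stmt5 (S : Set ℕ) (hS : IsNumSgp S) (hm : nsMult S = 3)
    (h : nsMIrr 3 S) : nsIrr S := by
  rintro ⟨T₁, T₂, hT₁, hT₂, hST₁, hST₂, heq⟩
  have h3S : 3 ∈ S := hm ▸ hS.nsMult_mem
  have h2S : 2 ∉ S := fun h2 => by have := nsMult_le h2 two_pos; omega
  have hS₁ : S ⊆ nsDropBelow 3 T₁ := hm ▸ subset_nsDropBelow_nsMult hST₁.subset
  have hS₂ : S ⊆ nsDropBelow 3 T₂ := hm ▸ subset_nsDropBelow_nsMult hST₂.subset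
  have hmult₁ : nsMult (nsDropBelow 3 T₁) = 3 := nsMult_nsDropBelow three_pos (hST₁.subset h3S)
  have hmult₂ : nsMult (nsDropBelow 3 T₂) = 3 := nsMult_nsDropBelow three_pos (hST₂.subset h3S)
  refine h ⟨_, _, isNumSgp_nsDropBelow hT₁ 3, isNumSgp_nsDropBelow hT₂ 3, hmult₁, hmult₂,
    ⟨hS₁, fun hT => h2S ?_⟩, ⟨hS₂, fun hT => h2S ?_⟩, (Set.subset_inter hS₁ hS₂).antisymm ?_⟩
  · exact two_mem_of_nsDropBelow_three_subset hS.1 h3S hT₁.2.1 hT₂.2.1 hST₁ hST₂ heq hT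
  · exact two_mem_of_nsDropBelow_three_subset hS.1 h3S hT₂.2.1 hT₁.2.1 hST₂ hST₁
      (heq.trans (Set.inter_comm _ _)) hT
  · exact heq ▸ Set.inter_subset_inter Set.inter_subset_left Set.inter_subset_left
end

section
/- Let S be a numerical semigroup with multiplicity 3 and Kunz-coordinates vector (x_1, x_2). Then S is an intersection of symmetric numerical semigroups with multiplicity 3 if and only if either S is 3-symmetric, or S is not 3-irreducible with x_1 odd and x_2 even. -/
/-!
A numerical semigroup of multiplicity `3` is determined by its Apéry elements `3 y1 + 1` and
`3 y2 + 2`: it is `kunz3 y1 y2`, with `1 ≤ y1 ≤ 2 y2 + 1` and `1 ≤ y2 ≤ 2 y1`. Inclusion of such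
semigroups is the reverse coordinatewise order and intersection is the coordinatewise maximum,
so everything becomes arithmetic on the coordinates.

`kunz3 x1 x2 = kunz3 x1 (x2 - 1) ∩ kunz3 (x1 - 1) x2` as soon as both factors are admissible, and
any splitting into two semigroups of multiplicity `3` forces them to be admissible; this
determines the `3`-irreducible ones. The symmetric ones are
exactly `y2 = 2 y1` and `y1 = 2 y2 + 1`: these have gaps symmetric about the Frobenius number,
which makes them irreducible, while an irreducible semigroup is in particular `3`-irreducible.
Finally an intersection of symmetric semigroups equals `kunz3 x1 x2` iff its members exclude the
gaps `3 x1 - 2` and `3 x2 - 1`, i.e. iff there are symmetric coordinates `(x1, b)` with `b ≤ x2`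
and `(a, x2)` with `a ≤ x1`.
-/

namespace IsNumSgp

variable {S : Set ℕ}

theorem zero_mem (hS : IsNumSgp S) : 0 ∈ S := hS.1

theorem add_mem (hS : IsNumSgp S) {a b : ℕ} (ha : a ∈ S) (hb : b ∈ S) : a + b ∈ S :=
  hS.2.1 a ha b hb

theorem mul_mem (hS : IsNumSgp S) {m : ℕ} (hm : m ∈ S) (k : ℕ) : m * k ∈ S := by
  induction k with
  | zero => exact hS.zero_mem
  | succ k ih => exact hS.add_mem ih hm

theorem le_nsFrob (hS : IsNumSgp S) {n : ℕ} (hn : n ∉ S) : n ≤ nsFrob S :=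
  le_csSup hS.2.2.bddAbove hn

theorem mem_of_nsFrob_lt (hS : IsNumSgp S) {n : ℕ} (hn : nsFrob S < n) : n ∈ S := by
  by_contra h
  exact (hS.le_nsFrob h).not_gt hn

theorem nsMult_mem_s12 (hS : IsNumSgp S) : nsMult S ∈ S := by
  have hne : {n | n ∈ S ∧ 0 < n}.Nonempty :=
    ⟨nsFrob S + 1, hS.mem_of_nsFrob_lt (Nat.lt_succ_self _), Nat.succ_pos _⟩
  exact (Nat.sInf_mem hne).1

theorem nsApery_mem (hS : IsNumSgp S) {m : ℕ} (hm : 0 < m) (i : ℕ) :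
    nsApery S m i ∈ S ∧ nsApery S m i % m = i % m := by
  have hlt : nsFrob S < i + m * (nsFrob S + 1) := by nlinarith
  have hne : {s | s ∈ S ∧ s % m = i % m}.Nonempty :=
    ⟨_, hS.mem_of_nsFrob_lt hlt, Nat.add_mul_mod_self_left _ _ _⟩
  exact Nat.sInf_mem hne

theorem nsApery_zero (hS : IsNumSgp S) (m : ℕ) : nsApery S m 0 = 0 :=
  Nat.eq_zero_of_le_zero (Nat.sInf_le ⟨hS.zero_mem, rfl⟩)

theorem mem_iff_nsApery_le (hS : IsNumSgp S) {m : ℕ} (hm : 0 < m) (hmS : m ∈ S) (n : ℕ) :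
    n ∈ S ↔ nsApery S m n ≤ n := by
  refine ⟨fun hn => Nat.sInf_le ⟨hn, rfl⟩, fun hle => ?_⟩
  obtain ⟨hw, hw_mod⟩ := hS.nsApery_mem hm n
  obtain ⟨k, hk⟩ : m ∣ n - nsApery S m n := (Nat.modEq_iff_dvd' hle).1 hw_mod
  have hn : n = nsApery S m n + m * k := by omega
  exact hn ▸ hS.add_mem hw (hS.mul_mem hmS k)

end IsNumSgp

theorem nsApery_congr {S : Set ℕ} {m i j : ℕ} (h : i % m = j % m) :
    nsApery S m i = nsApery S m j := by
  simp only [nsApery, h]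

theorem not_mem_of_lt_nsMult {S : Set ℕ} {n : ℕ} (hn : 0 < n) (hlt : n < nsMult S) : n ∉ S :=
  fun h => Nat.notMem_of_lt_sInf hlt ⟨h, hn⟩

theorem nsIrr.nsMIrr {S : Set ℕ} (h : nsIrr S) (m : ℕ) : nsMIrr m S :=
  fun ⟨T₁, T₂, h₁, h₂, _, _, hs₁, hs₂, heq⟩ => h ⟨T₁, T₂, h₁, h₂, hs₁, hs₂, heq⟩

/-- A numerical semigroup properly containing `T` contains every `t + (F - t)`, in particular `F`. -/
theorem nsIrr_of_nsFrob_sub_mem {T : Set ℕ} (hT : IsNumSgp T) (hF : nsFrob T ∉ T)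
    (hsym : ∀ n ∉ T, nsFrob T - n ∈ T) : nsIrr T := by
  have hF_mem : ∀ U, IsNumSgp U → T ⊂ U → nsFrob T ∈ U := by
    intro U hU hTU
    obtain ⟨t, htU, htT⟩ := Set.exists_of_ssubset hTU
    have h := hU.add_mem htU (hTU.subset (hsym t htT))
    rwa [Nat.add_sub_cancel' (hT.le_nsFrob htT)] at h
  rintro ⟨T₁, T₂, hT₁, hT₂, hs₁, hs₂, heq⟩
  exact hF (heq.symm.subset ⟨hF_mem T₁ hT₁ hs₁, hF_mem T₂ hT₂ hs₂⟩)

def kunz3 (y1 y2 : ℕ) : Set ℕ :=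
  {n | n % 3 = 0 ∨ (n % 3 = 1 ∧ 3 * y1 + 1 ≤ n) ∨ (n % 3 = 2 ∧ 3 * y2 + 2 ≤ n)}

def KunzAdmissible (y1 y2 : ℕ) : Prop := 1 ≤ y1 ∧ 1 ≤ y2 ∧ y1 ≤ 2 * y2 + 1 ∧ y2 ≤ 2 * y1

def KunzSymmetric (y1 y2 : ℕ) : Prop := (1 ≤ y1 ∧ y2 = 2 * y1) ∨ (1 ≤ y2 ∧ y1 = 2 * y2 + 1)

theorem KunzSymmetric.kunzAdmissible {y1 y2 : ℕ} (h : KunzSymmetric y1 y2) :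
    KunzAdmissible y1 y2 := by
  unfold KunzSymmetric KunzAdmissible at *
  omega

@[simp]
theorem mem_kunz3 {y1 y2 n : ℕ} :
    n ∈ kunz3 y1 y2 ↔
      n % 3 = 0 ∨ (n % 3 = 1 ∧ 3 * y1 + 1 ≤ n) ∨ (n % 3 = 2 ∧ 3 * y2 + 2 ≤ n) :=
  Iff.rfl

theorem kunz3_subset_kunz3_iff {a b c d : ℕ} : kunz3 a b ⊆ kunz3 c d ↔ c ≤ a ∧ d ≤ b := by
  refine ⟨fun h => ?_, fun h n => ?_⟩
  · have ha := h (show 3 * a + 1 ∈ kunz3 a b by simp)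
    have hb := h (show 3 * b + 2 ∈ kunz3 a b by simp)
    simp only [mem_kunz3] at ha hb
    omega
  · simp only [mem_kunz3]
    omega

theorem kunz3_ssubset_kunz3_iff {a b c d : ℕ} :
    kunz3 a b ⊂ kunz3 c d ↔ c ≤ a ∧ d ≤ b ∧ (c < a ∨ d < b) := by
  rw [ssubset_iff_subset_not_subset, kunz3_subset_kunz3_iff, kunz3_subset_kunz3_iff]
  omega

theorem kunz3_eq_kunz3_iff {a b c d : ℕ} : kunz3 a b = kunz3 c d ↔ a = c ∧ b = d := by
  rw [Set.Subset.antisymm_iff, kunz3_subset_kunz3_iff, kunz3_subset_kunz3_iff]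
  omega

theorem kunz3_inter_kunz3 (a b c d : ℕ) :
    kunz3 a b ∩ kunz3 c d = kunz3 (max a c) (max b d) := by
  ext n
  simp only [Set.mem_inter_iff, mem_kunz3]
  omega

theorem isNumSgp_kunz3 {y1 y2 : ℕ} (hv : KunzAdmissible y1 y2) : IsNumSgp (kunz3 y1 y2) := by
  unfold KunzAdmissible at hv
  refine ⟨by simp, fun a ha b hb => ?_, (Set.finite_Iio (3 * y1 + 3 * y2 + 3)).subset ?_⟩
  · simp only [mem_kunz3] at ha hb ⊢
    omega
  · intro n hn
    simp only [Set.mem_compl_iff, mem_kunz3, Set.mem_Iio] at hn ⊢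
    omega

theorem nsMult_kunz3 {y1 y2 : ℕ} (hv : KunzAdmissible y1 y2) : nsMult (kunz3 y1 y2) = 3 := by
  unfold KunzAdmissible at hv
  refine IsLeast.csInf_eq ⟨by simp, fun n ⟨hn, hpos⟩ => ?_⟩
  simp only [mem_kunz3] at hn
  omega

theorem nsFrob_kunz3 {y1 y2 : ℕ} (hv : KunzAdmissible y1 y2) :
    nsFrob (kunz3 y1 y2) = max (3 * y1 + 1) (3 * y2 + 2) - 3 := by
  unfold KunzAdmissible at hv
  refine IsGreatest.csSup_eq ⟨?_, fun n hn => ?_⟩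
  · simp only [Set.mem_compl_iff, mem_kunz3]
    omega
  · simp only [Set.mem_compl_iff, mem_kunz3] at hn
    omega

theorem IsNumSgp.eq_kunz3_of_nsApery {S : Set ℕ} (hS : IsNumSgp S) (h3 : 3 ∈ S) {x1 x2 : ℕ}
    (h1 : nsApery S 3 1 = 3 * x1 + 1) (h2 : nsApery S 3 2 = 3 * x2 + 2) : S = kunz3 x1 x2 := by
  ext n
  rw [hS.mem_iff_nsApery_le three_pos h3, mem_kunz3]
  rcases (by omega : n % 3 = 0 ∨ n % 3 = 1 ∨ n % 3 = 2) with h | h | h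
  · rw [nsApery_congr (j := 0) (by omega), hS.nsApery_zero]
    omega
  · rw [nsApery_congr (j := 1) (by omega), h1]
    omega
  · rw [nsApery_congr (j := 2) (by omega), h2]
    omega

theorem IsNumSgp.exists_eq_kunz3 {S : Set ℕ} (hS : IsNumSgp S) (h3 : 3 ∈ S) :
    ∃ y1 y2, S = kunz3 y1 y2 := by
  have h1 := (hS.nsApery_mem three_pos 1).2
  have h2 := (hS.nsApery_mem three_pos 2).2
  exact ⟨_, _, hS.eq_kunz3_of_nsApery h3 (x1 := nsApery S 3 1 / 3) (x2 := nsApery S 3 2 / 3)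
    (by omega) (by omega)⟩

theorem kunzAdmissible_of_isNumSgp {y1 y2 : ℕ} (h : IsNumSgp (kunz3 y1 y2))
    (hm : nsMult (kunz3 y1 y2) = 3) : KunzAdmissible y1 y2 := by
  have h1 : 1 ∉ kunz3 y1 y2 := not_mem_of_lt_nsMult one_pos (by omega)
  have h2 : 2 ∉ kunz3 y1 y2 := not_mem_of_lt_nsMult two_pos (by omega)
  have h11 := h.add_mem (show 3 * y1 + 1 ∈ kunz3 y1 y2 by simp) (show 3 * y1 + 1 ∈ _ by simp)
  have h22 := h.add_mem (show 3 * y2 + 2 ∈ kunz3 y1 y2 by simp) (show 3 * y2 + 2 ∈ _ by simp)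
  rw [mem_kunz3] at h1 h2 h11 h22
  unfold KunzAdmissible
  omega

theorem isNumSgp_nsMult_eq_three_iff {S : Set ℕ} :
    IsNumSgp S ∧ nsMult S = 3 ↔ ∃ y1 y2, KunzAdmissible y1 y2 ∧ S = kunz3 y1 y2 := by
  constructor
  · rintro ⟨hS, hm⟩
    obtain ⟨y1, y2, rfl⟩ := hS.exists_eq_kunz3 (hm ▸ hS.nsMult_mem_s12)
    exact ⟨y1, y2, kunzAdmissible_of_isNumSgp hS hm, rfl⟩
  · rintro ⟨y1, y2, hv, rfl⟩
    exact ⟨isNumSgp_kunz3 hv, nsMult_kunz3 hv⟩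

theorem nsMIrr_three_kunz3_iff {x1 x2 : ℕ} (hv : KunzAdmissible x1 x2) :
    nsMIrr 3 (kunz3 x1 x2) ↔ 2 * x2 ≤ x1 ∨ 2 * x1 ≤ x2 + 1 := by
  unfold KunzAdmissible at hv
  rw [nsMIrr, not_iff_comm, not_or, not_le, not_le]
  constructor
  · rintro ⟨h1, h2⟩
    have hA : KunzAdmissible x1 (x2 - 1) := by unfold KunzAdmissible; omega
    have hB : KunzAdmissible (x1 - 1) x2 := by unfold KunzAdmissible; omega
    refine ⟨kunz3 x1 (x2 - 1), kunz3 (x1 - 1) x2, isNumSgp_kunz3 hA, isNumSgp_kunz3 hB,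
      nsMult_kunz3 hA, nsMult_kunz3 hB, ?_, ?_, ?_⟩
    · rw [kunz3_ssubset_kunz3_iff]
      omega
    · rw [kunz3_ssubset_kunz3_iff]
      omega
    · rw [kunz3_inter_kunz3, kunz3_eq_kunz3_iff]
      omega
  · rintro ⟨T₁, T₂, hT₁, hT₂, hm₁, hm₂, hs₁, hs₂, heq⟩
    obtain ⟨a, b, hab, rfl⟩ := isNumSgp_nsMult_eq_three_iff.1 ⟨hT₁, hm₁⟩
    obtain ⟨c, d, hcd, rfl⟩ := isNumSgp_nsMult_eq_three_iff.1 ⟨hT₂, hm₂⟩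
    rw [kunz3_ssubset_kunz3_iff] at hs₁ hs₂
    rw [kunz3_inter_kunz3, kunz3_eq_kunz3_iff] at heq
    unfold KunzAdmissible at hab hcd
    omega

theorem nsSym_kunz3_iff {y1 y2 : ℕ} (hv : KunzAdmissible y1 y2) :
    nsSym (kunz3 y1 y2) ↔ KunzSymmetric y1 y2 := by
  have hirr := nsMIrr_three_kunz3_iff hv
  rw [nsSym, nsFrob_kunz3 hv, Nat.odd_iff]
  unfold KunzAdmissible at hv
  refine ⟨fun ⟨h, hodd⟩ => ?_, fun h => ⟨?_, ?_⟩⟩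
  · have := hirr.1 (h.nsMIrr 3)
    unfold KunzSymmetric
    omega
  · unfold KunzSymmetric at h
    refine nsIrr_of_nsFrob_sub_mem (isNumSgp_kunz3 hv) ?_ fun n hn => ?_
    · rw [nsFrob_kunz3 hv, mem_kunz3]
      omega
    · rw [mem_kunz3] at hn
      rw [nsFrob_kunz3 hv, mem_kunz3]
      omega
  · unfold KunzSymmetric at h
    omega

theorem isNumSgp_nsMult_eq_three_nsSym_iff {T : Set ℕ} :
    IsNumSgp T ∧ nsMult T = 3 ∧ nsSym T ↔ ∃ y1 y2, KunzSymmetric y1 y2 ∧ T = kunz3 y1 y2 := by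
  constructor
  · rintro ⟨hT, hm, hsym⟩
    obtain ⟨y1, y2, hv, rfl⟩ := isNumSgp_nsMult_eq_three_iff.1 ⟨hT, hm⟩
    exact ⟨y1, y2, (nsSym_kunz3_iff hv).1 hsym, rfl⟩
  · rintro ⟨y1, y2, hs, rfl⟩
    have hv := hs.kunzAdmissible
    exact ⟨isNumSgp_kunz3 hv, nsMult_kunz3 hv, (nsSym_kunz3_iff hv).2 hs⟩

theorem exists_sInter_nsSym_eq_kunz3_iff {x1 x2 : ℕ} (hv : KunzAdmissible x1 x2) :
    (∃ F : Set (Set ℕ), F.Nonempty ∧ F.Finite ∧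
        (∀ T ∈ F, IsNumSgp T ∧ nsMult T = 3 ∧ nsSym T) ∧ kunz3 x1 x2 = ⋂₀ F) ↔
      (∃ b ≤ x2, KunzSymmetric x1 b) ∧ ∃ a ≤ x1, KunzSymmetric a x2 := by
  simp only [isNumSgp_nsMult_eq_three_nsSym_iff]
  unfold KunzAdmissible at hv
  constructor
  · rintro ⟨F, -, -, hF, hSF⟩
    have hexcl : ∀ n ∉ kunz3 x1 x2,
        ∃ a b, KunzSymmetric a b ∧ a ≤ x1 ∧ b ≤ x2 ∧ n ∉ kunz3 a b := by
      intro n hn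
      simp only [hSF, Set.mem_sInter, not_forall] at hn
      obtain ⟨T, hTF, hnT⟩ := hn
      obtain ⟨a, b, hab, rfl⟩ := hF T hTF
      have hsub : kunz3 x1 x2 ⊆ kunz3 a b := hSF ▸ Set.sInter_subset_of_mem hTF
      exact ⟨a, b, hab, (kunz3_subset_kunz3_iff.1 hsub).1, (kunz3_subset_kunz3_iff.1 hsub).2, hnT⟩
    obtain ⟨a, b, hab, ha, hb, hgap₁⟩ := hexcl (3 * x1 - 2) (by rw [mem_kunz3]; omega)
    obtain ⟨c, d, hcd, hc, hd, hgap₂⟩ := hexcl (3 * x2 - 1) (by rw [mem_kunz3]; omega)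
    rw [mem_kunz3] at hgap₁ hgap₂
    obtain rfl : a = x1 := by omega
    obtain rfl : d = x2 := by omega
    exact ⟨⟨b, hb, hab⟩, ⟨c, hc, hcd⟩⟩
  · rintro ⟨⟨b, hb, hsb⟩, ⟨a, ha, hsa⟩⟩
    refine ⟨{kunz3 x1 b, kunz3 a x2}, Set.insert_nonempty _ _, Set.toFinite _, ?_, ?_⟩
    · rintro T (rfl | rfl)
      exacts [⟨x1, b, hsb, rfl⟩, ⟨a, x2, hsa, rfl⟩]
    · rw [Set.sInter_pair, kunz3_inter_kunz3, kunz3_eq_kunz3_iff]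
      omega

theorem exists_le_kunzSymmetric_left_iff {x1 x2 : ℕ} (hv : KunzAdmissible x1 x2) :
    (∃ b ≤ x2, KunzSymmetric x1 b) ↔ x2 = 2 * x1 ∨ (Odd x1 ∧ 3 ≤ x1) := by
  unfold KunzAdmissible at hv
  rw [Nat.odd_iff]
  constructor
  · rintro ⟨b, hb, hs⟩
    unfold KunzSymmetric at hs
    omega
  · rintro (h | h)
    · exact ⟨x2, le_rfl, Or.inl ⟨hv.1, h⟩⟩
    · exact ⟨(x1 - 1) / 2, by omega, Or.inr ⟨by omega, by omega⟩⟩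

theorem exists_le_kunzSymmetric_right_iff {x1 x2 : ℕ} (hv : KunzAdmissible x1 x2) :
    (∃ a ≤ x1, KunzSymmetric a x2) ↔ x1 = 2 * x2 + 1 ∨ (Even x2 ∧ 2 ≤ x2) := by
  unfold KunzAdmissible at hv
  rw [Nat.even_iff]
  constructor
  · rintro ⟨a, ha, hs⟩
    unfold KunzSymmetric at hs
    omega
  · rintro (h | h)
    · exact ⟨x1, le_rfl, Or.inr ⟨hv.2.1, h⟩⟩
    · exact ⟨x2 / 2, by omega, Or.inl ⟨by omega, by omega⟩⟩

/-- S of multiplicity 3 is an intersection of symmetric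
numerical semigroups with multiplicity 3 iff S is 3-symmetric, or S is not
3-irreducible with x1 odd and x2 even. -/
theorem stmt12 (S : Set ℕ) (x1 x2 : ℕ) (hS : IsNumSgp S) (hm : nsMult S = 3)
    (h1 : nsApery S 3 1 = 3 * x1 + 1) (h2 : nsApery S 3 2 = 3 * x2 + 2) :
    (∃ F : Set (Set ℕ), F.Nonempty ∧ F.Finite ∧
        (∀ T ∈ F, IsNumSgp T ∧ nsMult T = 3 ∧ nsSym T) ∧ S = ⋂₀ F) ↔
      (nsMSym 3 S ∨ (¬ nsMIrr 3 S ∧ Odd x1 ∧ Even x2)) := by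
  obtain rfl := hS.eq_kunz3_of_nsApery (hm ▸ hS.nsMult_mem_s12) h1 h2
  have hv := kunzAdmissible_of_isNumSgp hS hm
  rw [exists_sInter_nsSym_eq_kunz3_iff hv, exists_le_kunzSymmetric_left_iff hv,
    exists_le_kunzSymmetric_right_iff hv, nsMSym, nsMIrr_three_kunz3_iff hv, nsFrob_kunz3 hv]
  unfold KunzAdmissible at hv
  simp only [Nat.odd_iff, Nat.even_iff]
  omega
end
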